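/- arXiv:1901.09172 — 2 statements merged into one kernel-verified Lean document; each statement's English description precedes it below -/
import Mathlib

section
/- Let S be a commutative semiring whose addition is idempotent (a + a = a for all a in S), let M be an S-module, let K be a finite group, and let ρ : K → Aut_S(M) be an action of K on M by S-linear automorphisms. Suppose f_1, …, f_n are elements of M that generate M as an S-module, i.e., the S-span of {f_1, …, f_n} is all of M. For each i define g_i := ∑_{σ ∈ K} ρ(σ)(f_i) (sum taken in M over all elements of K). Then the S-span of {g_1, …, g_n} is exactly the set of K-fixed points M^K = { m ∈ M : ρ(σ)(m) = m for all σ ∈ K }. -/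
/-- Theorem 3.6 (algebraic core): over an additively idempotent commutative semiring `S`,
if `f : Fin n → M` generates the `S`-module `M` and a finite group `K` acts on `M`
by `S`-linear automorphisms via `ρ`, then the symmetrized elements
`g i = ∑_{σ ∈ K} ρ σ (f i)` span exactly the `K`-fixed points of `M`. -/
theorem span_symmetrized_generators_eq_fixedPoints
    {S : Type*} [CommSemiring S] {M : Type*} [AddCommMonoid M] [Module S M]
    (hS : ∀ a : S, a + a = a)
    {K : Type*} [Group K] [Fintype K]
    (ρ : K →* (M ≃ₗ[S] M))
    {n : ℕ} (f : Fin n → M)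
    (hf : Submodule.span S (Set.range f) = ⊤)
    (g : Fin n → M) (hg : ∀ i, g i = ∑ σ : K, ρ σ (f i)) :
    (Submodule.span S (Set.range g) : Set M) = {m : M | ∀ σ : K, ρ σ m = m} := by
  -- addition in M is idempotent
  have hM : ∀ m : M, m + m = m := by
    intro m
    have h1 : ((1 : S) + 1) • m = m := by rw [hS 1, one_smul]
    calc m + m = ((1 : S) + 1) • m := by rw [add_smul, one_smul]
      _ = m := h1
  have hnsmul : ∀ (k : ℕ), 0 < k → ∀ m : M, k • m = m := by
    intro k hk m
    induction k with
    | zero => omega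
    | succ j ih =>
      rcases Nat.eq_zero_or_pos j with h | h
      · subst h; simp
      · rw [succ_nsmul, ih h, hM]
  -- each g i is K-fixed
  have hmul : ∀ (τ σ : K) (x : M), ρ τ (ρ σ x) = ρ (τ * σ) x := by
    intro τ σ x
    rw [map_mul]
    rfl
  have hginv : ∀ i (τ : K), ρ τ (g i) = g i := by
    intro i τ
    rw [hg, map_sum]
    have := Equiv.sum_comp (Equiv.mulLeft τ) (fun σ : K => ρ σ (f i))
    calc ∑ σ : K, ρ τ (ρ σ (f i)) = ∑ σ : K, ρ (τ * σ) (f i) := by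
          simp only [hmul]
      _ = ∑ σ : K, ρ σ (f i) := by
          rw [← this]; rfl
  -- fixed points form a submodule
  let F : Submodule S M :=
    { carrier := {m : M | ∀ σ : K, ρ σ m = m}
      add_mem' := fun {a b} ha hb σ => by simp [map_add, ha σ, hb σ]
      zero_mem' := fun σ => by simp
      smul_mem' := fun c x hx σ => by simp [map_smul, hx σ] }
  apply Set.eq_of_subset_of_subset
  · have hle : Submodule.span S (Set.range g) ≤ F := by
      rw [Submodule.span_le]
      rintro _ ⟨i, rfl⟩
      exact hginv i
    exact hle
  · intro m hm
    -- write m as a combination of f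
    have hmem : m ∈ Submodule.span S (Set.range f) := by rw [hf]; trivial
    obtain ⟨c, hc⟩ := (Finsupp.mem_span_range_iff_exists_finsupp).mp hmem
    have hcard : 0 < Fintype.card K := Fintype.card_pos
    have hmsum : m = ∑ τ : K, ρ τ m := by
      have : ∑ τ : K, ρ τ m = ∑ _τ : K, m := by
        apply Finset.sum_congr rfl
        intro τ _
        exact hm τ
      rw [this, Finset.sum_const, Finset.card_univ]
      exact (hnsmul _ hcard m).symm
    have key : m = c.sum fun i a => a • g i := by
      rw [hmsum]
      have : ∀ τ : K, ρ τ m = c.sum fun i a => a • ρ τ (f i) := by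
        intro τ
        rw [← hc, Finsupp.sum, map_sum, Finsupp.sum]
        apply Finset.sum_congr rfl
        intro i _
        rw [map_smul]
      simp only [this, Finsupp.sum]
      rw [Finset.sum_comm]
      apply Finset.sum_congr rfl
      intro i _
      rw [hg, Finset.smul_sum]
    rw [key]
    apply Submodule.sum_smul_mem
    intro i _
    exact Submodule.subset_span ⟨i, rfl⟩
end

section
/- Let S be a commutative semiring whose addition is idempotent (a + a = a for all a in S), let M be an S-module, let K be a finite group, and let ρ : K → Aut_S(M) be an action of K on M by S-linear automorphisms. Suppose f_1, …, f_n ∈ M generate M as an S-module, and set g_i := ∑_{σ ∈ K} ρ(σ)(f_i). Then every K-fixed element m ∈ M (i.e., ρ(σ)(m) = m for all σ ∈ K) lies in the S-span of {g_1, …, g_n}. Concretely, if m = ∑_{i=1}^n a_i • f_i with a_i ∈ S, then m = ∑_{i=1}^n a_i • g_i. -/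
/-- The nontrivial inclusion in Theorem 3.6: over an additively idempotent commutative
semiring `S`, if `f : Fin n → M` generates `M`, every `K`-fixed element
`m = ∑ i, a i • f i` equals `∑ i, a i • g i` with `g i = ∑_{σ ∈ K} ρ σ (f i)`,
so it lies in the span of the symmetrized generators. -/
theorem fixed_element_eq_sum_symmetrized_generators
    {S : Type*} [CommSemiring S] {M : Type*} [AddCommMonoid M] [Module S M]
    (hS : ∀ a : S, a + a = a)
    {K : Type*} [Group K] [Fintype K]
    (ρ : K →* (M ≃ₗ[S] M))
    {n : ℕ} (f : Fin n → M)
    (hf : Submodule.span S (Set.range f) = ⊤)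
    (m : M) (hm : ∀ σ : K, ρ σ m = m)
    (a : Fin n → S) (hma : m = ∑ i, a i • f i) :
    m = ∑ i, a i • ∑ σ : K, ρ σ (f i) := by
  have hMm : ∀ x : M, x + x = x := by
    intro x
    calc x + x = (1 + 1 : S) • x := by rw [add_smul, one_smul]
    _ = (1 : S) • x := by rw [hS 1]
    _ = x := one_smul _ _
  have hk : ∀ k : ℕ, 0 < k → k • m = m := by
    intro k hk
    induction k with
    | zero => omega
    | succ k ih =>
      rcases Nat.eq_zero_or_pos k with h | h
      · simp [h]
      · rw [succ_nsmul, ih h, hMm]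
  have h1 : m = ∑ σ : K, ρ σ m := by
    rw [Finset.sum_congr rfl (fun σ _ => hm σ), Finset.sum_const, Finset.card_univ,
      hk _ Fintype.card_pos]
  calc m = ∑ σ : K, ρ σ m := h1
  _ = ∑ σ : K, ∑ i, a i • ρ σ (f i) := by
      refine Finset.sum_congr rfl fun σ _ => ?_
      rw [hma, map_sum]
      exact Finset.sum_congr rfl fun i _ => by rw [map_smul]
  _ = ∑ i, a i • ∑ σ : K, ρ σ (f i) := by
      rw [Finset.sum_comm]
      exact Finset.sum_congr rfl fun i _ => (Finset.smul_sum).symm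
end
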